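/- For all z₁, z₂ > 0 and every t > 0, the two convolutions agree: ∫_0^t g₊(x; z₁) · g₊(t - x; z₂) dx = ∫_0^t g₊(x; 0) · g₊(t - x; z₁ + z₂) dx; i.e., the sum of two independent generalized inverse Gaussian random variables with parameters (1, z₁², 1/2) and (1, z₂², 1/2) has the same distribution as the sum of an independent chi-square random variable with one degree of freedom and a generalized inverse Gaussian random variable with parameters (1, (z₁+z₂)², 1/2). -/

import Mathlib

/-!
Write `g₊(x; z) = e^z e^{-x/2} q_z(x) / √(2π)` with `q_c(x) = x^{-1/2} e^{-c²/(2x)}`. The factors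
`e^{-x/2}` of a convolution at `t` combine to `e^{-t/2}`, so the claim is
`q_{z₁} ⋆ q_{z₂} = q_0 ⋆ q_{z₁+z₂}`. The core identity is `ℓ_a ⋆ q_b = √(2π) q_{a+b}` for `a > 0`,
`b ≥ 0`, where `ℓ_a(x) = (a/x) q_a(x)`: substituting `x = s/(1+r²)` turns `(ℓ_a ⋆ q_b)(s)` into a
Gaussian integral in `a r - b/r`, which the Cauchy–Schlömilch substitution evaluates. Hence, by
associativity and commutativity of convolution,
`√(2π) q_{z₁} ⋆ q_{z₂} = ℓ_{z₁} ⋆ q_0 ⋆ q_{z₂} = ℓ_{z₁} ⋆ q_{z₂} ⋆ q_0 = √(2π) q_{z₁+z₂} ⋆ q_0`.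
The kernels are taken `ℝ≥0∞`-valued, so that Tonelli gives associativity with no integrability
side conditions.
-/

/-- The generalized inverse Gaussian density with parameters `(ψ, χ, λ) = (1, z², +1/2)`:
`g₊(x; z) = (e^z / √(2π)) x^{-1/2} exp(-z²/(2x) - x/2)`.  At `z = 0` this is the chi-square
density with one degree of freedom. -/
noncomputable def gigPlus (z x : ℝ) : ℝ :=
  Real.exp z / Real.sqrt (2 * Real.pi) * x ^ (-(1 : ℝ) / 2) *
    Real.exp (-z ^ 2 / (2 * x) - x / 2)

open MeasureTheory Real Set
open scoped ENNReal

lemma lintegral_eq_two_mul_setLIntegral_Ioi {f : ℝ → ℝ≥0∞} (hf : ∀ y, f (-y) = f y) :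
    ∫⁻ y, f y = 2 * ∫⁻ y in Ioi 0, f y := by
  have hneg : ∫⁻ y in Iio 0, f y = ∫⁻ y in Ioi 0, f y := by
    have := lintegral_image_eq_lintegral_abs_deriv_mul (measurableSet_Ioi (a := (0 : ℝ)))
      (fun x _ => (hasDerivAt_neg x).hasDerivWithinAt) neg_injective.injOn f
    simpa [hf] using this
  rw [← lintegral_add_compl f measurableSet_Ioi, compl_Ioi, ← setLIntegral_congr Iio_ae_eq_Iic,
    hneg, two_mul]

lemma strictMonoOn_mul_sub_div {a b : ℝ} (ha : 0 < a) (hb : 0 ≤ b) :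
    StrictMonoOn (fun r => a * r - b / r) (Ioi 0) := by
  intro r hr r' _ hrr'
  have : b / r' ≤ b / r := div_le_div_of_nonneg_left hb hr hrr'.le
  dsimp only
  nlinarith

lemma image_mul_sub_div_Ioi {a b : ℝ} (ha : 0 < a) (hb : 0 < b) :
    (fun r => a * r - b / r) '' Ioi 0 = univ := by
  refine eq_univ_of_forall fun y => ?_
  set D := √(y ^ 2 + 4 * a * b)
  have hD : D ^ 2 = y ^ 2 + 4 * a * b := sq_sqrt (by positivity)
  have hDy : -y < D := by
    nlinarith [sqrt_nonneg (y ^ 2 + 4 * a * b), neg_abs_le y, sq_abs y, abs_nonneg y]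
  have hr : 0 < (y + D) / (2 * a) := div_pos (by linarith) (by positivity)
  refine ⟨_, hr, ?_⟩
  have hyD : y + D ≠ 0 := by linarith
  field_simp
  linear_combination hD

lemma bijOn_const_mul_inv {c : ℝ} (hc : 0 < c) :
    BijOn (fun r => c * r⁻¹) (Ioi 0) (Ioi 0) := by
  have hinv : InvOn (fun r => c * r⁻¹) (fun r => c * r⁻¹) (Ioi 0) (Ioi 0) := by
    constructor <;> intro r (hr : 0 < r) <;> field_simp
  have hmaps : MapsTo (fun r => c * r⁻¹) (Ioi 0) (Ioi 0) := fun r (hr : 0 < r) => by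
    simp only [mem_Ioi]; positivity
  exact hinv.bijOn hmaps hmaps

/-- The Cauchy–Schlömilch substitution. -/
theorem lintegral_Ioi_comp_mul_sub_div {a b : ℝ} (ha : 0 < a) (hb : 0 ≤ b) {f : ℝ → ℝ≥0∞}
    (hf : Measurable f) (hf_even : ∀ y, f (-y) = f y) :
    ENNReal.ofReal a * ∫⁻ r in Ioi 0, f (a * r - b / r) = ∫⁻ y in Ioi 0, f y := by
  set φ : ℝ → ℝ := fun r => a * r - b / r
  have hφ_meas : Measurable fun r => f (φ r) := hf.comp (by fun_prop)
  have hφ' : ∀ r ∈ Ioi (0 : ℝ), HasDerivWithinAt φ (a + b / r ^ 2) (Ioi 0) r := by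
    intro r (hr : 0 < r)
    have : HasDerivAt φ (a * 1 - b * -(r ^ 2)⁻¹) r := by
      simpa only [φ, div_eq_mul_inv, Pi.sub_def, id] using
        ((hasDerivAt_id r).const_mul a).sub ((hasDerivAt_inv hr.ne').const_mul b)
    exact (this.congr_deriv (by ring)).hasDerivWithinAt
  have hsplit : ∫⁻ y in φ '' Ioi 0, f y = ENNReal.ofReal a * (∫⁻ r in Ioi 0, f (φ r)) +
      ∫⁻ r in Ioi 0, ENNReal.ofReal (b / r ^ 2) * f (φ r) := by
    rw [lintegral_image_eq_lintegral_abs_deriv_mul measurableSet_Ioi hφ'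
      (strictMonoOn_mul_sub_div ha hb).injOn, ← lintegral_const_mul' _ _ ENNReal.ofReal_ne_top,
      ← lintegral_add_left (hφ_meas.const_mul _)]
    refine setLIntegral_congr_fun measurableSet_Ioi fun r (hr : (0 : ℝ) < r) => ?_
    rw [abs_of_pos (by positivity), ENNReal.ofReal_add ha.le (by positivity), add_mul]
  rcases hb.eq_or_lt with rfl | hb
  · simpa [φ, image_mul_left_Ioi ha] using hsplit.symm
  -- `r ↦ b / (a r)` exchanges the two halves, since it maps `a r - b / r` to its negative
  have hswap : ∫⁻ r in Ioi 0, ENNReal.ofReal (b / r ^ 2) * f (φ r) =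
      ENNReal.ofReal a * ∫⁻ r in Ioi 0, f (φ r) := by
    have hψ := bijOn_const_mul_inv (div_pos hb ha)
    have hψ' : ∀ r ∈ Ioi (0 : ℝ), HasDerivWithinAt (fun r => b / a * r⁻¹)
        (b / a * -(r ^ 2)⁻¹) (Ioi 0) r := fun r (hr : 0 < r) =>
      ((hasDerivAt_inv hr.ne').const_mul _).hasDerivWithinAt
    rw [← lintegral_const_mul' _ _ ENNReal.ofReal_ne_top]
    conv_rhs => rw [← hψ.image_eq,
      lintegral_image_eq_lintegral_abs_deriv_mul measurableSet_Ioi hψ' hψ.injOn]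
    refine setLIntegral_congr_fun measurableSet_Ioi fun r (hr : (0 : ℝ) < r) => ?_
    have hφψ : φ (b / a * r⁻¹) = -φ r := by
      simp only [φ]; field_simp; ring
    have hψ'_nonpos : b / a * -(r ^ 2)⁻¹ ≤ 0 := by
      have : 0 ≤ b / a * (r ^ 2)⁻¹ := by positivity
      linarith
    rw [hφψ, hf_even, ← mul_assoc, ← ENNReal.ofReal_mul (abs_nonneg _), abs_of_nonpos hψ'_nonpos]
    congr 2
    field_simp
  rw [image_mul_sub_div_Ioi ha hb, setLIntegral_univ,
    lintegral_eq_two_mul_setLIntegral_Ioi hf_even, hswap, ← two_mul] at hsplit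
  exact ((ENNReal.mul_right_inj two_ne_zero ENNReal.ofNat_ne_top).1 hsplit).symm

lemma lintegral_gaussian_Ioi {c : ℝ} (hc : 0 < c) :
    ∫⁻ y in Ioi 0, ENNReal.ofReal (exp (-c * y ^ 2)) = ENNReal.ofReal (√(π / c) / 2) := by
  rw [← ofReal_integral_eq_lintegral_ofReal (integrable_exp_neg_mul_sq hc).integrableOn
    (Filter.Eventually.of_forall fun _ => (exp_pos _).le), integral_gaussian_Ioi]

lemma bijOn_div_one_add_sq {s : ℝ} (hs : 0 < s) :
    BijOn (fun r => s / (1 + r ^ 2)) (Ioi 0) (Ioo 0 s) := by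
  have hinv : InvOn (fun x => √(s / x - 1)) (fun r => s / (1 + r ^ 2)) (Ioi 0) (Ioo 0 s) := by
    constructor
    · intro r (hr : 0 < r)
      have : s / (s / (1 + r ^ 2)) - 1 = r ^ 2 := by field_simp; ring
      simp only [this, sqrt_sq hr.le]
    · rintro x ⟨hx, hxs⟩
      have : 0 ≤ s / x - 1 := by rw [sub_nonneg, le_div_iff₀ hx]; linarith
      simp only [sq_sqrt this]
      field_simp
      ring
  refine hinv.bijOn (fun r (hr : 0 < r) => ⟨by positivity, ?_⟩) fun x ⟨hx, hxs⟩ => ?_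
  · rw [div_lt_iff₀ (by positivity)]
    nlinarith [mul_pos hs (pow_pos hr 2)]
  · exact sqrt_pos.2 (by rw [sub_pos, lt_div_iff₀ hx]; linarith)

lemma hasDerivAt_div_one_add_sq (s r : ℝ) :
    HasDerivAt (fun r => s / (1 + r ^ 2)) (-(2 * s * r / (1 + r ^ 2) ^ 2)) r := by
  have h := (((hasDerivAt_pow 2 r).const_add 1).inv (by positivity)).const_mul s
  simp only [Pi.inv_apply, ← div_eq_mul_inv] at h
  exact h.congr_deriv (by push_cast; ring)

section Convolution

variable {f g : ℝ → ℝ≥0∞}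

lemma smul_lconvolution {c : ℝ≥0∞} (hc : c ≠ ⊤) : (c • f) ⋆ₗ g = c • (f ⋆ₗ g) := by
  ext x
  simp only [lconvolution_def, Pi.smul_apply, smul_eq_mul, mul_assoc,
    lintegral_const_mul' _ _ hc]

lemma lconvolution_eq_setLIntegral_Ioo (hf : ∀ x ≤ 0, f x = 0) (hg : ∀ x ≤ 0, g x = 0) (t : ℝ) :
    (f ⋆ₗ g) t = ∫⁻ y in Ioo 0 t, f y * g (t - y) := by
  rw [lconvolution_def, setLIntegral_eq_of_support_subset]
  · simp only [neg_add_eq_sub]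
  · intro y hy
    by_contra hy'
    rcases not_and_or.1 hy' with hy0 | hyt
    · exact hy (by simp [hf y (not_lt.1 hy0)])
    · exact hy (by simp [hg (t - y) (by linarith [not_lt.1 hyt])])

end Convolution

/-- `q_c`; it vanishes for `x ≤ 0`, where `√x = 0`. -/
noncomputable def gigKernel (c x : ℝ) : ℝ≥0∞ := ENNReal.ofReal ((√x)⁻¹ * exp (-c ^ 2 / (2 * x)))

/-- `ℓ_a`: `√(2π)` times the density of the first passage time of Brownian motion to level `a`. -/
noncomputable def levyKernel (a x : ℝ) : ℝ≥0∞ := ENNReal.ofReal (a / x) * gigKernel a x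

lemma gigKernel_of_nonpos (c x : ℝ) (hx : x ≤ 0) : gigKernel c x = 0 := by
  simp [gigKernel, sqrt_eq_zero'.2 hx]

lemma levyKernel_of_nonpos (a x : ℝ) (hx : x ≤ 0) : levyKernel a x = 0 := by
  simp [levyKernel, gigKernel_of_nonpos a x hx]

@[fun_prop]
lemma measurable_gigKernel (c : ℝ) : Measurable (gigKernel c) := by
  unfold gigKernel; fun_prop

@[fun_prop]
lemma measurable_levyKernel (a : ℝ) : Measurable (levyKernel a) := by
  unfold levyKernel; fun_prop

lemma levyKernel_mul_gigKernel_div_one_add_sq (b : ℝ) {a s r : ℝ} (ha : 0 ≤ a) (hs : 0 < s)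
    (hr : 0 < r) :
    ENNReal.ofReal |-(2 * s * r / (1 + r ^ 2) ^ 2)| *
      (levyKernel a (s / (1 + r ^ 2)) * gigKernel b (s - s / (1 + r ^ 2))) =
    ENNReal.ofReal (2 / s * exp (-(a + b) ^ 2 / (2 * s))) *
      (ENNReal.ofReal a * ENNReal.ofReal (exp (-(2 * s)⁻¹ * (a * r - b / r) ^ 2))) := by
  set x := s / (1 + r ^ 2)
  have hx : 0 < x := by positivity
  have hsx : s - x = s * r ^ 2 / (1 + r ^ 2) := by simp only [x]; field_simp; ring
  have hsqrt : √x * √(s - x) = s * r / (1 + r ^ 2) := by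
    rw [← sqrt_mul hx.le, hsx, show x * (s * r ^ 2 / (1 + r ^ 2)) = (s * r / (1 + r ^ 2)) ^ 2 by
      simp only [x]; ring, sqrt_sq (by positivity)]
  have hexp : exp (-a ^ 2 / (2 * x)) * exp (-b ^ 2 / (2 * (s - x))) =
      exp (-(a + b) ^ 2 / (2 * s)) * exp (-(2 * s)⁻¹ * (a * r - b / r) ^ 2) := by
    rw [← exp_add, ← exp_add, hsx]
    congr 1
    simp only [x]
    field_simp
    ring
  rw [levyKernel, gigKernel, gigKernel, ← ENNReal.ofReal_mul (by positivity),
    ← ENNReal.ofReal_mul (by positivity), ← ENNReal.ofReal_mul (by positivity),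
    ← ENNReal.ofReal_mul ha, ← ENNReal.ofReal_mul (by positivity), abs_neg,
    abs_of_pos (by positivity)]
  congr 1
  calc _ = 2 * s * r / (1 + r ^ 2) ^ 2 * (a / x) * (√x * √(s - x))⁻¹ *
        (exp (-a ^ 2 / (2 * x)) * exp (-b ^ 2 / (2 * (s - x)))) := by
        rw [mul_inv]; ring
    _ = _ := by
        rw [hsqrt, hexp]
        simp only [x]
        field_simp

theorem levyKernel_lconvolution_gigKernel {a b : ℝ} (ha : 0 < a) (hb : 0 ≤ b) :
    levyKernel a ⋆ₗ gigKernel b = ENNReal.ofReal √(2 * π) • gigKernel (a + b) := by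
  ext s
  rw [lconvolution_eq_setLIntegral_Ioo (levyKernel_of_nonpos a) (gigKernel_of_nonpos b),
    Pi.smul_apply, smul_eq_mul]
  rcases le_or_gt s 0 with hs | hs
  · simp [gigKernel_of_nonpos _ s hs, hs]
  have hχ := bijOn_div_one_add_sq hs
  have hCS := lintegral_Ioi_comp_mul_sub_div ha hb
    (f := fun y => ENNReal.ofReal (exp (-(2 * s)⁻¹ * y ^ 2))) (by fun_prop) (by simp)
  rw [← hχ.image_eq, lintegral_image_eq_lintegral_abs_deriv_mul measurableSet_Ioi
      (fun r _ => (hasDerivAt_div_one_add_sq s r).hasDerivWithinAt) hχ.injOn,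
    setLIntegral_congr_fun measurableSet_Ioi
      fun r (hr : 0 < r) => levyKernel_mul_gigKernel_div_one_add_sq b ha.le hs hr,
    lintegral_const_mul' _ _ ENNReal.ofReal_ne_top, lintegral_const_mul' _ _ ENNReal.ofReal_ne_top,
    hCS, lintegral_gaussian_Ioi (by positivity), gigKernel, ← ENNReal.ofReal_mul (by positivity),
    ← ENNReal.ofReal_mul (by positivity)]
  congr 1
  have hπ : √(π / (2 * s)⁻¹) = √(2 * π) * √s := by
    rw [div_inv_eq_mul, ← sqrt_mul (by positivity)]; ring_nf
  have hss : √s * √s = s := mul_self_sqrt hs.le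
  have hs' : 0 < √s := sqrt_pos.2 hs
  rw [hπ]
  field_simp
  linear_combination hss

theorem gigKernel_lconvolution_gigKernel {z₁ z₂ : ℝ} (h₁ : 0 ≤ z₁) (h₂ : 0 ≤ z₂) :
    gigKernel z₁ ⋆ₗ gigKernel z₂ = gigKernel 0 ⋆ₗ gigKernel (z₁ + z₂) := by
  rcases h₁.eq_or_lt with rfl | h₁
  · rw [zero_add]
  set C := ENNReal.ofReal √(2 * π)
  have hC : C ≠ 0 := by simp [C, pi_pos]
  have key : C • (gigKernel z₁ ⋆ₗ gigKernel z₂) = C • (gigKernel 0 ⋆ₗ gigKernel (z₁ + z₂)) := by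
    calc C • (gigKernel z₁ ⋆ₗ gigKernel z₂)
        = (levyKernel z₁ ⋆ₗ gigKernel 0) ⋆ₗ gigKernel z₂ := by
          rw [levyKernel_lconvolution_gigKernel h₁ le_rfl, add_zero,
            smul_lconvolution ENNReal.ofReal_ne_top]
      _ = levyKernel z₁ ⋆ₗ gigKernel z₂ ⋆ₗ gigKernel 0 := by
          rw [← lconvolution_assoc (by fun_prop) (by fun_prop) (by fun_prop),
            lconvolution_comm (f := gigKernel 0)]
      _ = C • (gigKernel 0 ⋆ₗ gigKernel (z₁ + z₂)) := by
          rw [lconvolution_assoc (by fun_prop) (by fun_prop) (by fun_prop),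
            levyKernel_lconvolution_gigKernel h₁ h₂, smul_lconvolution ENNReal.ofReal_ne_top,
            lconvolution_comm]
  ext x
  exact (ENNReal.mul_right_inj hC ENNReal.ofReal_ne_top).1 (congrFun key x)

lemma gigPlus_eq {z x : ℝ} (hx : 0 < x) :
    gigPlus z x = exp z / √(2 * π) * exp (-x / 2) * (gigKernel z x).toReal := by
  rw [gigPlus, gigKernel, ENNReal.toReal_ofReal (by positivity),
    show -(1 : ℝ) / 2 = -(1 / 2) by norm_num, rpow_neg hx.le, ← sqrt_eq_rpow, sub_eq_add_neg,
    exp_add]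
  ring_nf

lemma gigPlus_mul_gigPlus {z z' t x : ℝ} (hx : x ∈ Ioo 0 t) :
    gigPlus z x * gigPlus z' (t - x) =
      exp (z + z') / (2 * π) * exp (-t / 2) * (gigKernel z x * gigKernel z' (t - x)).toReal := by
  rw [gigPlus_eq hx.1, gigPlus_eq (sub_pos.2 hx.2), ENNReal.toReal_mul, exp_add,
    show exp (-t / 2) = exp (-x / 2) * exp (-(t - x) / 2) by rw [← exp_add]; ring_nf]
  field_simp
  rw [sq_sqrt (by positivity)]

lemma integral_toReal_gigKernel_mul {c c' t : ℝ} :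
    ∫ x in Ioo 0 t, (gigKernel c x * gigKernel c' (t - x)).toReal =
      ((gigKernel c ⋆ₗ gigKernel c') t).toReal := by
  have hfin : ∀ x, gigKernel c x * gigKernel c' (t - x) < ⊤ := fun _ =>
    ENNReal.mul_lt_top ENNReal.ofReal_lt_top ENNReal.ofReal_lt_top
  rw [integral_toReal (by fun_prop) (Filter.Eventually.of_forall hfin),
    lconvolution_eq_setLIntegral_Ioo (gigKernel_of_nonpos c) (gigKernel_of_nonpos c')]

theorem stmt_4 (z₁ z₂ t : ℝ) (hz₁ : 0 < z₁) (hz₂ : 0 < z₂) (ht : 0 < t) :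
    ∫ x in (0 : ℝ)..t, gigPlus z₁ x * gigPlus z₂ (t - x) =
    ∫ x in (0 : ℝ)..t, gigPlus 0 x * gigPlus (z₁ + z₂) (t - x) := by
  simp only [intervalIntegral.integral_of_le ht.le, integral_Ioc_eq_integral_Ioo]
  rw [setIntegral_congr_fun measurableSet_Ioo fun x hx => gigPlus_mul_gigPlus hx,
    setIntegral_congr_fun measurableSet_Ioo fun x hx => gigPlus_mul_gigPlus hx,
    integral_const_mul, integral_const_mul, integral_toReal_gigKernel_mul,
    integral_toReal_gigKernel_mul, gigKernel_lconvolution_gigKernel hz₁.le hz₂.le, zero_add]
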